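/- arXiv:1001.0030 — 2 statements merged into one kernel-verified Lean document; each statement's English description precedes it below -/
import Mathlib

section
/- Let G be a group, c ∈ G with c^h = 1, and m ≥ 1. Define φ on (m+1)-tuples (w₀; w₁, …, w_m) with w₀w₁⋯w_m = c by φ(w₀; w₁, …, w_m) = ((c w_m c⁻¹) w₀ (c w_m c⁻¹)⁻¹; c w_m c⁻¹, w₁, w₂, …, w_{m−1}). Then φ is a well-defined map of this set to itself (the product of the components of the image again equals c), and φ^{mh} is the identity on this set. -/
/-- The map φ of Armstrong:
φ(w₀; w₁, …, w_m) = ((c w_m c⁻¹) w₀ (c w_m c⁻¹)⁻¹; c w_m c⁻¹, w₁, …, w_{m−1}). -/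
def phiMap {G : Type*} [Group G] (c : G) (m : ℕ) (w : Fin (m + 1) → G) : Fin (m + 1) → G :=
  fun i =>
    if i = 0 then (c * w (Fin.last m) * c⁻¹) * w 0 * (c * w (Fin.last m) * c⁻¹)⁻¹
    else if i = 1 then c * w (Fin.last m) * c⁻¹
    else w (i - 1)

/-!
On the tail `(w₁, …, w_m)`, `φ` acts as the twisted rotation
`v ↦ (c v_m c⁻¹, v₁, …, v_{m-1})`, whose `m`-th power conjugates every entry by `c`; so when
`c ^ h = 1`, `φ^{mh}` fixes the tail. The head `w₀` is determined by the tail and the condition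
that the product is `c`, and `φ` preserves this condition, so the head is fixed as well.
-/

section TwistRotate

variable {G : Type*} [Group G] (c : G)

def twistRotate (l : List G) : List G :=
  (l.getLast?.map (MulAut.conj c)).toList ++ l.dropLast

@[simp]
lemma twistRotate_append_singleton (l : List G) (x : G) :
    twistRotate c (l ++ [x]) = MulAut.conj c x :: l := by
  simp [twistRotate]

lemma twistRotate_iterate_length_append (a b : List G) :
    (twistRotate c)^[b.length] (a ++ b) = b.map (MulAut.conj c) ++ a := by
  induction b using List.reverseRecOn generalizing a with
  | nil => simp
  | append_singleton b x ih =>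
    rw [List.length_append, List.length_singleton, Function.iterate_succ_apply,
      ← List.append_assoc, twistRotate_append_singleton, ← List.cons_append, ih]
    simp

lemma twistRotate_iterate_length_mul (h : ℕ) (l : List G) :
    (twistRotate c)^[l.length * h] l = l.map (MulAut.conj (c ^ h)) := by
  induction h generalizing l with
  | zero => simp
  | succ h ih =>
    have hround := twistRotate_iterate_length_append c [] l
    rw [List.nil_append, List.append_nil] at hround
    rw [mul_add_one, Function.iterate_add_apply, hround, ← List.length_map (MulAut.conj c), ih,
      List.map_map, pow_succ, map_mul, MulAut.coe_mul]

end TwistRotate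

section PhiMap

variable {G : Type*} [Group G] (c : G)

lemma Fin.succ_sub_one_eq_castSucc {n : ℕ} (i : Fin (n + 1)) : i.succ - 1 = i.castSucc :=
  Fin.ext <| by simp [Fin.val_sub_one_of_ne_zero (Fin.succ_ne_zero i)]

lemma ofFn_tail_phiMap {n : ℕ} (w : Fin (n + 2) → G) :
    List.ofFn (Fin.tail (phiMap c (n + 1) w)) = twistRotate c (List.ofFn (Fin.tail w)) := by
  have h1 : phiMap c (n + 1) w 1 = MulAut.conj c (w (Fin.last (n + 1))) := by
    simp [phiMap]
  have hsucc (i : Fin n) : phiMap c (n + 1) w i.succ.succ = w i.castSucc.succ := by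
    simp [phiMap, Fin.succ_succ_ne_one, Fin.succ_sub_one_eq_castSucc]
  rw [List.ofFn_succ' (Fin.tail w), List.concat_eq_append, twistRotate_append_singleton,
    List.ofFn_succ]
  simp [Fin.tail, h1, hsucc]

lemma prod_ofFn_eq_head_mul {n : ℕ} (w : Fin (n + 1) → G) :
    (List.ofFn w).prod = w 0 * (List.ofFn (Fin.tail w)).prod := by
  rw [List.ofFn_succ, List.prod_cons]; rfl

lemma prod_ofFn_phiMap {m : ℕ} (w : Fin (m + 1) → G) (hw : (List.ofFn w).prod = c) :
    (List.ofFn (phiMap c m w)).prod = c := by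
  cases m with
  | zero =>
    simp_all [phiMap]
  | succ n =>
    have hsplit : List.ofFn (Fin.tail w) =
        List.ofFn (fun i : Fin n => w i.castSucc.succ) ++ [w (Fin.last (n + 1))] :=
      List.ofFn_succ' _ |>.trans (List.concat_eq_append ..)
    rw [prod_ofFn_eq_head_mul, hsplit, List.prod_append, List.prod_singleton] at hw
    rw [prod_ofFn_eq_head_mul, ofFn_tail_phiMap, hsplit, twistRotate_append_singleton,
      List.prod_cons, ← hw]
    simp only [phiMap, if_pos, MulAut.conj_apply]
    group

lemma prod_ofFn_phiMap_iterate {m : ℕ} (k : ℕ) {w : Fin (m + 1) → G}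
    (hw : (List.ofFn w).prod = c) : (List.ofFn ((phiMap c m)^[k] w)).prod = c :=
  Set.MapsTo.iterate (s := {w | (List.ofFn w).prod = c}) (prod_ofFn_phiMap c) k hw

lemma ofFn_tail_phiMap_iterate {n : ℕ} (k : ℕ) (w : Fin (n + 2) → G) :
    List.ofFn (Fin.tail ((phiMap c (n + 1))^[k] w)) =
      (twistRotate c)^[k] (List.ofFn (Fin.tail w)) :=
  Function.Semiconj.iterate_right (f := fun w => List.ofFn (Fin.tail w))
    (fun w => ofFn_tail_phiMap c w) k w

lemma eq_of_tail_eq_of_prod_ofFn_eq {n : ℕ} {v w : Fin (n + 1) → G}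
    (htail : Fin.tail v = Fin.tail w) (hprod : (List.ofFn v).prod = (List.ofFn w).prod) :
    v = w := by
  rw [prod_ofFn_eq_head_mul, prod_ofFn_eq_head_mul, htail] at hprod
  rw [← Fin.cons_self_tail v, ← Fin.cons_self_tail w, htail, mul_right_cancel hprod]

end PhiMap

theorem phiMap_preserves_and_order_general {G : Type*} [Group G] (c : G) (h m : ℕ)
    (hc : c ^ h = 1) :
    (∀ w : Fin (m + 1) → G, (List.ofFn w).prod = c → (List.ofFn (phiMap c m w)).prod = c) ∧
    (∀ w : Fin (m + 1) → G, (List.ofFn w).prod = c → (phiMap c m)^[m * h] w = w) := by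
  refine ⟨prod_ofFn_phiMap c, fun w hw => ?_⟩
  cases m with
  | zero => rw [zero_mul, Function.iterate_zero_apply]
  | succ n =>
    have hperiod := twistRotate_iterate_length_mul c h (List.ofFn (Fin.tail w))
    rw [List.length_ofFn, hc, map_one, MulAut.coe_one, List.map_id] at hperiod
    have htail := (ofFn_tail_phiMap_iterate c ((n + 1) * h) w).trans hperiod
    exact eq_of_tail_eq_of_prod_ofFn_eq (List.ofFn_injective htail)
      ((prod_ofFn_phiMap_iterate c _ hw).trans hw.symm)

theorem phiMap_preserves_and_order {G : Type*} [Group G] (c : G) (h m : ℕ)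
    (hc : c ^ h = 1) (hm : 1 ≤ m) :
    (∀ w : Fin (m + 1) → G, (List.ofFn w).prod = c → (List.ofFn (phiMap c m w)).prod = c) ∧
    (∀ w : Fin (m + 1) → G, (List.ofFn w).prod = c → (phiMap c m)^[m * h] w = w) :=
  phiMap_preserves_and_order_general c h m hc
end

section
/- For every even nonnegative integer m, one has 1 + 713·(m/2) + 5965·C(m/2, 2) + 11925·C(m/2, 3) + 6750·C(m/2, 4) = (5m+4)(3m+2)(5m+2)(15m+4)/64. -/
theorem count_E8_half_identity_two_mul (k : ℕ) :
    (1 : ℚ) + 713 * k + 5965 * (k.choose 2 : ℕ) + 11925 * (k.choose 3 : ℕ) +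
        6750 * (k.choose 4 : ℕ) =
      (10 * k + 4) * (6 * k + 2) * (10 * k + 2) * (30 * k + 4) / 64 := by
  -- `C(k, j) = k (k - 1) ⋯ (k - j + 1) / j!` turns both sides into polynomials in `k`.
  simp only [Nat.cast_choose_eq_descPochhammer_div, descPochhammer_succ_eval,
    descPochhammer_zero, Polynomial.eval_one, Nat.factorial]
  push_cast
  ring

theorem count_E8_half_identity (m : ℕ) (hm : 2 ∣ m) :
    (1 : ℚ) + 713 * ((m / 2 : ℕ) : ℚ) + 5965 * (((m / 2).choose 2 : ℕ) : ℚ) +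
        11925 * (((m / 2).choose 3 : ℕ) : ℚ) + 6750 * (((m / 2).choose 4 : ℕ) : ℚ) =
      (((5 * m + 4) * (3 * m + 2) * (5 * m + 2) * (15 * m + 4) : ℕ) : ℚ) / 64 := by
  obtain ⟨k, rfl⟩ := hm
  rw [Nat.mul_div_cancel_left k two_pos, count_E8_half_identity_two_mul]
  push_cast
  ring
end
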